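/- arXiv:math/0006065 — 8 statements merged into one kernel-verified Lean document; each statement's English description precedes it below -/
import Mathlib

section
/- If a nilpotent group G of class at most two is generated by elements of exponent n, where n is odd, then every element of G has order dividing n. -/
/-!
Write `c = ⁅b, a⁆`, so that `b * a = c * a * b`. If `c` commutes with `a` and `b`, pushing all
the `a`'s of `(a * b) ^ k` to the left creates one `c` per transposition, giving
`(a * b) ^ k = a ^ k * b ^ k * c ^ (k choose 2)`; also `b ^ n = 1` forces `c ^ n = 1`. For odd `n`,
`n` divides `n choose 2`, so the elements with `g ^ n = 1` form a subgroup, which contains `S`.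
-/

open scoped commutatorElement

theorem Nat.dvd_choose_two_of_odd {n : ℕ} (hn : Odd n) : n ∣ n.choose 2 := by
  obtain ⟨m, rfl⟩ := hn
  refine ⟨m, ?_⟩
  rw [Nat.choose_two_right, Nat.add_sub_cancel, Nat.mul_div_assoc _ (dvd_mul_right 2 m),
    Nat.mul_div_cancel_left m two_pos]

section CommutatorCommutes

variable {G : Type*} [Group G] {a b : G}

theorem mul_eq_commutatorElement_mul_mul (a b : G) : b * a = ⁅b, a⁆ * a * b := by
  group

theorem pow_mul_eq_commutatorElement_pow_mul_mul_pow (hb : Commute ⁅b, a⁆ b) (k : ℕ) :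
    b ^ k * a = ⁅b, a⁆ ^ k * a * b ^ k := by
  have hba := mul_eq_commutatorElement_mul_mul a b
  generalize ⁅b, a⁆ = c at *
  induction k with
  | zero => simp
  | succ k ih =>
    calc b ^ (k + 1) * a = b * c ^ k * a * b ^ k := by rw [pow_succ', mul_assoc, ih]; group
      _ = c ^ k * (b * a) * b ^ k := by rw [(hb.pow_left k).symm.eq]; group
      _ = c ^ (k + 1) * a * b ^ (k + 1) := by rw [hba]; group

theorem commutatorElement_pow_eq_one_of_pow_eq_one (hb : Commute ⁅b, a⁆ b) {n : ℕ}
    (hbn : b ^ n = 1) : ⁅b, a⁆ ^ n = 1 := by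
  have h := pow_mul_eq_commutatorElement_pow_mul_mul_pow hb n
  rwa [hbn, one_mul, mul_one, right_eq_mul] at h

theorem mul_pow_eq_mul_pow_mul_commutatorElement_pow (ha : Commute ⁅b, a⁆ a)
    (hb : Commute ⁅b, a⁆ b) (k : ℕ) :
    (a * b) ^ k = a ^ k * b ^ k * ⁅b, a⁆ ^ k.choose 2 := by
  have hpow := pow_mul_eq_commutatorElement_pow_mul_mul_pow hb
  generalize ⁅b, a⁆ = c at *
  induction k with
  | zero => simp
  | succ k ih =>
    calc (a * b) ^ (k + 1) = a ^ k * b ^ k * (c ^ k.choose 2 * (a * b)) := by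
          rw [pow_succ, ih]; group
      _ = a ^ k * (b ^ k * a) * b * c ^ k.choose 2 := by
          rw [((ha.mul_right hb).pow_left _).eq]; group
      _ = a ^ k * (c ^ k * a * b ^ (k + 1)) * c ^ k.choose 2 := by
          rw [hpow]; group
      _ = a ^ (k + 1) * b ^ (k + 1) * (c ^ k * c ^ k.choose 2) := by
          rw [mul_assoc (c ^ k), ((ha.mul_right (hb.pow_right _)).pow_left k).eq]; group
      _ = a ^ (k + 1) * b ^ (k + 1) * c ^ (k + 1).choose 2 := by
          rw [← pow_add, Nat.choose_succ_succ', Nat.choose_one_right]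

theorem mul_pow_eq_one_of_odd (ha : Commute ⁅b, a⁆ a) (hb : Commute ⁅b, a⁆ b) {n : ℕ}
    (hn : Odd n) (han : a ^ n = 1) (hbn : b ^ n = 1) : (a * b) ^ n = 1 := by
  obtain ⟨m, hm⟩ := Nat.dvd_choose_two_of_odd hn
  rw [mul_pow_eq_mul_pow_mul_commutatorElement_pow ha hb, han, hbn, hm, pow_mul,
    commutatorElement_pow_eq_one_of_pow_eq_one hb hbn, one_pow, one_mul, one_mul]

end CommutatorCommutes

theorem pow_eq_one_of_mem_closure_of_commutator_le_center {G : Type*} [Group G]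
    (hG : commutator G ≤ Subgroup.center G) {n : ℕ} (hn : Odd n) {S : Set G}
    (hS : ∀ s ∈ S, s ^ n = 1) {g : G} (hg : g ∈ Subgroup.closure S) : g ^ n = 1 := by
  have hcomm (x y z : G) : Commute ⁅y, x⁆ z :=
    (Subgroup.mem_center_iff.mp
      (hG (Subgroup.commutator_mem_commutator (Subgroup.mem_top y) (Subgroup.mem_top x))) z).symm
  induction hg using Subgroup.closure_induction with
  | mem s hs => exact hS s hs
  | one => exact one_pow n
  | mul x y _ _ hx hy => exact mul_pow_eq_one_of_odd (hcomm x y x) (hcomm x y y) hn hx hy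
  | inv x _ hx => rw [inv_pow, hx, inv_one]

/-- If a nil-2 group is generated by elements of exponent `n` with `n` odd, then every
element has order dividing `n`. -/
theorem stmt_4 {G : Type*} [Group G] (hG : commutator G ≤ Subgroup.center G)
    (n : ℕ) (hn : Odd n) (S : Set G) (hgen : Subgroup.closure S = ⊤)
    (hS : ∀ s ∈ S, s ^ n = 1) :
    ∀ g : G, g ^ n = 1 :=
  fun g => pow_eq_one_of_mem_closure_of_commutator_le_center hG hn hS (hgen ▸ Subgroup.mem_top g)
end

section
/- If a nilpotent group G of class at most two is generated by elements each of order dividing n, then every element of G has order dividing 2n. -/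
/-!
When commutators are central, `⁅a, b⁆` is multiplicative in `a`, so `a ↦ ⁅a, b⁆ ^ n` is a
homomorphism that kills the generators; hence every commutator has order dividing `n`. The
formula `(a * b) ^ k = a ^ k * b ^ k * ⁅b, a⁆ ^ k.choose 2` then makes `g ↦ g ^ (2 * n)` an
endomorphism, because `n ∣ (2 * n).choose 2`, and it too is trivial on the generators.
-/

open scoped commutatorElement

namespace Nat

theorem dvd_choose_two_two_mul (n : ℕ) : n ∣ (2 * n).choose 2 :=
  ⟨2 * n - 1, by rw [choose_two_right, mul_assoc, Nat.mul_div_cancel_left _ two_pos]⟩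

end Nat

section CentralCommutators

variable {G : Type*} [Group G] (hG : commutator G ≤ Subgroup.center G)
include hG

theorem commutatorElement_mem_center (a b : G) : ⁅a, b⁆ ∈ Subgroup.center G :=
  hG (Subgroup.commutator_mem_commutator (Subgroup.mem_top a) (Subgroup.mem_top b))

theorem commutatorElement_mul_left_of_le_center (a b c : G) :
    ⁅a * b, c⁆ = ⁅a, c⁆ * ⁅b, c⁆ := by
  have central := Subgroup.mem_center_iff.mp (commutatorElement_mem_center hG b c)
  rw [commutatorElement_mul_left_eq_conj_mul, central, mul_inv_cancel_right, central]

def commutatorLeftHom (c : G) : G →* Subgroup.center G where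
  toFun a := ⟨⁅a, c⁆, commutatorElement_mem_center hG a c⟩
  map_one' := Subtype.ext (commutatorElement_one_left c)
  map_mul' a b := Subtype.ext (commutatorElement_mul_left_of_le_center hG a b c)

theorem commutatorElement_pow_left_of_le_center (a c : G) (k : ℕ) :
    ⁅a ^ k, c⁆ = ⁅a, c⁆ ^ k :=
  congrArg Subtype.val (map_pow (commutatorLeftHom hG c) a k)

theorem mul_pow_eq_mul_pow_mul_commutatorElement (a b : G) (k : ℕ) :
    (a * b) ^ k = a ^ k * b ^ k * ⁅b, a⁆ ^ k.choose 2 := by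
  have central (m : ℕ) (g : G) : g * ⁅b, a⁆ ^ m = ⁅b, a⁆ ^ m * g :=
    Subgroup.mem_center_iff.mp (Subgroup.pow_mem _ (commutatorElement_mem_center hG b a) m) g
  induction k with
  | zero => simp
  | succ k ih =>
    have swap : b ^ k * a = ⁅b, a⁆ ^ k * a * b ^ k := by
      rw [← commutatorElement_pow_left_of_le_center hG, commutatorElement_def]; group
    calc (a * b) ^ (k + 1) = a ^ k * (b ^ k * a) * b * ⁅b, a⁆ ^ k.choose 2 := by
          rw [pow_succ, ih, mul_assoc _ (⁅b, a⁆ ^ _), ← central]; simp only [mul_assoc]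
      _ = a ^ (k + 1) * b ^ (k + 1) * ⁅b, a⁆ ^ (k + 1).choose 2 := by
          have choose_succ : (k + 1).choose 2 = k.choose 2 + k := by
            rw [Nat.choose_succ_succ k 1, Nat.choose_one_right, add_comm]
          rw [swap, choose_succ, pow_add ⁅b, a⁆, pow_succ a, pow_succ b]
          simp only [mul_assoc]
          rw [← central k]
          simp only [mul_assoc]

open scoped IsMulCommutative in
theorem commutatorElement_pow_eq_one_of_closure_eq_top {n : ℕ} {S : Set G}
    (hgen : Subgroup.closure S = ⊤) (hS : ∀ s ∈ S, s ^ n = 1) (a b : G) : ⁅a, b⁆ ^ n = 1 := by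
  have : (powMonoidHom n).comp (commutatorLeftHom hG b) = 1 :=
    MonoidHom.eq_of_eqOn_dense hgen fun s hs => Subtype.ext <| by
      simp [commutatorLeftHom, ← commutatorElement_pow_left_of_le_center hG, hS s hs]
  exact congrArg Subtype.val (DFunLike.congr_fun this a)

def powMonoidHomOfCommutatorElementPow (k : ℕ) (hk : ∀ a b : G, ⁅a, b⁆ ^ k.choose 2 = 1) :
    G →* G where
  toFun g := g ^ k
  map_one' := one_pow k
  map_mul' a b := by rw [mul_pow_eq_mul_pow_mul_commutatorElement hG, hk, mul_one]

theorem pow_eq_one_of_closure_eq_top {k : ℕ} (hk : ∀ a b : G, ⁅a, b⁆ ^ k.choose 2 = 1)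
    {S : Set G} (hgen : Subgroup.closure S = ⊤) (hS : ∀ s ∈ S, s ^ k = 1) (g : G) :
    g ^ k = 1 :=
  DFunLike.congr_fun
    (MonoidHom.eq_of_eqOn_dense hgen (f := powMonoidHomOfCommutatorElementPow hG k hk) (g := 1) hS) g

end CentralCommutators

theorem stmt_5_general {G : Type*} [Group G] (hG : commutator G ≤ Subgroup.center G)
    (n : ℕ) (S : Set G) (hgen : Subgroup.closure S = ⊤)
    (hS : ∀ s ∈ S, s ^ n = 1) :
    ∀ g : G, g ^ (2 * n) = 1 := by
  have hcomm (a b : G) : ⁅a, b⁆ ^ (2 * n).choose 2 = 1 := by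
    obtain ⟨m, hm⟩ := Nat.dvd_choose_two_two_mul n
    rw [hm, pow_mul, commutatorElement_pow_eq_one_of_closure_eq_top hG hgen hS, one_pow]
  exact pow_eq_one_of_closure_eq_top hG hcomm hgen fun s hs => by
    rw [mul_comm, pow_mul, hS s hs, one_pow]

/-- If a nil-2 group is generated by elements each of order dividing `n`, then every
element has order dividing `2n`. -/
theorem stmt_5 {G : Type*} [Group G] (hG : commutator G ≤ Subgroup.center G)
    (n : ℕ) (hn : 0 < n) (S : Set G) (hgen : Subgroup.closure S = ⊤)
    (hS : ∀ s ∈ S, s ^ n = 1) :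
    ∀ g : G, g ^ (2 * n) = 1 :=
  stmt_5_general hG n S hgen hS
end

section
/- If a nilpotent group K of class at most two is generated by a subgroup G of exponent dividing 2n together with elements of exponent dividing n, then K has exponent dividing 2n. -/
/-!
When all commutators are central, `(a * b) ^ m = a ^ m * b ^ m * ⁅b, a⁆ ^ (m.choose 2)` and
`⁅b ^ n, a⁆ = ⁅b, a⁆ ^ n`. As `(2 * n).choose 2 = n * (2 * n - 1)`, the commutator factor of
`(a * b) ^ (2 * n)` vanishes as soon as `b ^ n` is central. Hence the elements `c` with `c ^ n`
central and `c ^ (2 * n) = 1` form a normal subgroup `D`; it contains `S`, so `K = G * D`, and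
every `g * c` with `g ∈ G`, `c ∈ D` satisfies `(g * c) ^ (2 * n) = g ^ (2 * n) * c ^ (2 * n) = 1`.
-/

open Subgroup
open scoped commutatorElement

section CommutatorLeCenter

variable {K : Type*} [Group K]

theorem commutatorElement_mem_center_of_commutator_le_center
    (hK : commutator K ≤ center K) (a b : K) : ⁅a, b⁆ ∈ center K :=
  hK (commutator_mem_commutator (mem_top a) (mem_top b))

theorem commutatorElement_mul_left_of_commutator_le_center
    (hK : commutator K ≤ center K) (x y b : K) : ⁅x * y, b⁆ = ⁅x, b⁆ * ⁅y, b⁆ := by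
  have hyb := mem_center_iff.mp (commutatorElement_mem_center_of_commutator_le_center hK y b)
  calc ⁅x * y, b⁆ = x * ⁅y, b⁆ * (b * x⁻¹ * b⁻¹) := by
        simp only [commutatorElement_def]; group
    _ = ⁅y, b⁆ * ⁅x, b⁆ := by
        rw [hyb x]; simp only [commutatorElement_def, mul_assoc]
    _ = ⁅x, b⁆ * ⁅y, b⁆ := (hyb _).symm

theorem commutatorElement_pow_left_of_commutator_le_center
    (hK : commutator K ≤ center K) (a b : K) (m : ℕ) : ⁅a ^ m, b⁆ = ⁅a, b⁆ ^ m := by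
  induction m with
  | zero => simp
  | succ m ih =>
    rw [pow_succ, commutatorElement_mul_left_of_commutator_le_center hK, ih, pow_succ]

theorem mul_pow_of_commutator_le_center (hK : commutator K ≤ center K) (a b : K) (m : ℕ) :
    (a * b) ^ m = a ^ m * b ^ m * ⁅b, a⁆ ^ m.choose 2 := by
  have central : ∀ k : ℕ, ∀ g, g * ⁅b, a⁆ ^ k = ⁅b, a⁆ ^ k * g := fun k =>
    mem_center_iff.mp (pow_mem (commutatorElement_mem_center_of_commutator_le_center hK b a) k)
  have swap : ∀ k : ℕ, b ^ k * a = ⁅b, a⁆ ^ k * a * b ^ k := fun k => by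
    rw [← commutatorElement_pow_left_of_commutator_le_center hK, commutatorElement_def]; group
  induction m with
  | zero => simp
  | succ m ih =>
    calc (a * b) ^ (m + 1) = a ^ m * (b ^ m * a) * b * ⁅b, a⁆ ^ m.choose 2 := by
          rw [pow_succ, ih, mul_assoc _ _ (a * b), ← central]; simp only [mul_assoc]
      _ = a ^ m * a * (b ^ m * b) * (⁅b, a⁆ ^ m * ⁅b, a⁆ ^ m.choose 2) := by
          rw [swap]; simp only [mul_assoc]; congr 1
          rw [← central m]; simp only [mul_assoc]; rw [← pow_add, ← pow_add, add_comm]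
      _ = a ^ (m + 1) * b ^ (m + 1) * ⁅b, a⁆ ^ (m + 1).choose 2 := by
          rw [Nat.choose_succ_succ', Nat.choose_one_right, pow_add ⁅b, a⁆, pow_succ a,
            pow_succ b]

theorem mul_pow_two_mul_of_pow_mem_center (hK : commutator K ≤ center K) {n : ℕ} (a : K)
    {b : K} (hb : b ^ n ∈ center K) : (a * b) ^ (2 * n) = a ^ (2 * n) * b ^ (2 * n) := by
  have hcomm : ⁅b, a⁆ ^ n = 1 := by
    rw [← commutatorElement_pow_left_of_commutator_le_center hK,
      commutatorElement_eq_one_iff_mul_comm]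
    exact (mem_center_iff.mp hb a).symm
  have hchoose : (2 * n).choose 2 = n * (2 * n - 1) := by
    rw [Nat.choose_two_right, mul_assoc, Nat.mul_div_cancel_left _ two_pos]
  rw [mul_pow_of_commutator_le_center hK, hchoose, pow_mul ⁅b, a⁆, hcomm, one_pow, mul_one]

def powCentralTorsion (hK : commutator K ≤ center K) (n : ℕ) : Subgroup K where
  carrier := {c | c ^ n ∈ center K ∧ c ^ (2 * n) = 1}
  one_mem' := by simp [one_mem]
  mul_mem' {c d} hc hd := by
    refine ⟨?_, by rw [mul_pow_two_mul_of_pow_mem_center hK c hd.1, hc.2, hd.2, one_mul]⟩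
    rw [mul_pow_of_commutator_le_center hK]
    exact mul_mem (mul_mem hc.1 hd.1)
      (pow_mem (commutatorElement_mem_center_of_commutator_le_center hK d c) _)
  inv_mem' hc := ⟨by rw [inv_pow]; exact inv_mem hc.1, by rw [inv_pow, hc.2, inv_one]⟩

instance (hK : commutator K ≤ center K) (n : ℕ) : (powCentralTorsion hK n).Normal where
  conj_mem c hc g := by
    refine ⟨?_, by rw [conj_pow, hc.2, mul_one, mul_inv_cancel]⟩
    rw [conj_pow, mem_center_iff.mp hc.1 g, mul_inv_cancel_right]
    exact hc.1

end CommutatorLeCenter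

theorem stmt_6_general {K : Type*} [Group K] (hK : commutator K ≤ Subgroup.center K)
    (n : ℕ) (G : Subgroup K) (S : Set K)
    (hG : ∀ g ∈ G, g ^ (2 * n) = 1) (hS : ∀ s ∈ S, s ^ n = 1)
    (hgen : Subgroup.closure ((G : Set K) ∪ S) = ⊤) :
    ∀ k : K, k ^ (2 * n) = 1 := by
  have hS_le : S ⊆ powCentralTorsion hK n := fun s hs =>
    ⟨by rw [hS s hs]; exact one_mem _, by rw [mul_comm, pow_mul, hS s hs, one_pow]⟩
  have hgen_le : closure ((G : Set K) ∪ S) ≤ G ⊔ powCentralTorsion hK n := by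
    rw [closure_le]
    exact Set.union_subset (SetLike.coe_subset_coe.mpr le_sup_left)
      (hS_le.trans (SetLike.coe_subset_coe.mpr le_sup_right))
  intro k
  obtain ⟨g, hg, c, hc, rfl⟩ := mem_sup_of_normal_right.mp (hgen_le (hgen ▸ mem_top k))
  rw [mul_pow_two_mul_of_pow_mem_center hK g hc.1, hG g hg, hc.2, one_mul]

/-- If a nil-2 group `K` is generated by a subgroup `G` of exponent dividing `2n`
together with elements of exponent dividing `n`, then `K` has exponent dividing `2n`. -/
theorem stmt_6 {K : Type*} [Group K] (hK : commutator K ≤ Subgroup.center K)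
    (n : ℕ) (hn : 0 < n) (G : Subgroup K) (S : Set K)
    (hG : ∀ g ∈ G, g ^ (2 * n) = 1) (hS : ∀ s ∈ S, s ^ n = 1)
    (hgen : Subgroup.closure ((G : Set K) ∪ S) = ⊤) :
    ∀ k : K, k ^ (2 * n) = 1 :=
  stmt_6_general hK n G S hG hS hgen
end

section
/- Let G be a nilpotent group of class at most two, let K be a nil-2 overgroup of G, and suppose x, y ∈ G satisfy x = rⁿ r' and y = sⁿ s' for some r, s ∈ K and r', s' ∈ [K,K]. If there exist integers a, b, c, j and elements g₁, g₂ ∈ G with g₁ⁿ ≡ xᵃ yᵇ (mod [K,K]) and g₂ⁿ ≡ x^(b+j) y^c (mod [K,K]), then [r,s]^(jn) = [g₁,x][g₂,y]; in particular [r,s]^(jn) ∈ G. -/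
/-!
When `[K,K]` is central, the commutator map `K × K → K` is bimultiplicative and only depends on
its arguments modulo `[K,K]`. With `w = ⁅r, s⁆` this gives `⁅x, r⁆ = ⁅y, s⁆ = 1`, `⁅x, s⁆ = wⁿ`,
`⁅y, r⁆ = w⁻ⁿ`, and, moving the exponent `n` across, `⁅g, x⁆ = ⁅gⁿ, r⁆` and `⁅g, y⁆ = ⁅gⁿ, s⁆`.
Hence `⁅g₁, x⁆ = ⁅xᵃ yᵇ, r⁆ = w^(-nb)` and `⁅g₂, y⁆ = ⁅x^(b+j) y^c, s⁆ = w^(n(b+j))`, whose product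
is `w^(jn)`.
-/

open scoped commutatorElement

namespace CentralCommutator

variable {K : Type*} [Group K]

theorem commute_of_mem_commutator (hK : commutator K ≤ Subgroup.center K) {z : K}
    (hz : z ∈ commutator K) (g : K) : Commute z g :=
  ((Subgroup.mem_center_iff.mp (hK hz)) g).symm

theorem commutatorElement_commute (hK : commutator K ≤ Subgroup.center K) (a b g : K) :
    Commute ⁅a, b⁆ g :=
  commute_of_mem_commutator hK
    (Subgroup.commutator_mem_commutator (Subgroup.mem_top a) (Subgroup.mem_top b)) g

theorem commutatorElement_mul_left (hK : commutator K ≤ Subgroup.center K) (a b c : K) :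
    ⁅a * b, c⁆ = ⁅a, c⁆ * ⁅b, c⁆ := by
  rw [commutatorElement_mul_left_eq_conj_mul, ← (commutatorElement_commute hK b c a).eq,
    mul_inv_cancel_right, (commutatorElement_commute hK b c _).eq]

theorem commutatorElement_mul_right (hK : commutator K ≤ Subgroup.center K) (a b c : K) :
    ⁅a, b * c⁆ = ⁅a, b⁆ * ⁅a, c⁆ := by
  rw [commutatorElement_mul_right_eq_mul_conj, mul_assoc _ b,
    ← (commutatorElement_commute hK a c b).eq, ← mul_assoc, mul_inv_cancel_right]

def commutatorLeftHom (hK : commutator K ≤ Subgroup.center K) (c : K) : K →* K :=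
  MonoidHom.mk' (fun a ↦ ⁅a, c⁆) fun a b ↦ commutatorElement_mul_left hK a b c

def commutatorRightHom (hK : commutator K ≤ Subgroup.center K) (a : K) : K →* K :=
  MonoidHom.mk' (fun b ↦ ⁅a, b⁆) fun b c ↦ commutatorElement_mul_right hK a b c

theorem commutatorElement_zpow_left (hK : commutator K ≤ Subgroup.center K) (a c : K) (m : ℤ) :
    ⁅a ^ m, c⁆ = ⁅a, c⁆ ^ m :=
  map_zpow (commutatorLeftHom hK c) a m

theorem commutatorElement_pow_left (hK : commutator K ≤ Subgroup.center K) (a c : K) (m : ℕ) :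
    ⁅a ^ m, c⁆ = ⁅a, c⁆ ^ m :=
  map_pow (commutatorLeftHom hK c) a m

theorem commutatorElement_pow_right (hK : commutator K ≤ Subgroup.center K) (a b : K) (m : ℕ) :
    ⁅a, b ^ m⁆ = ⁅a, b⁆ ^ m :=
  map_pow (commutatorRightHom hK a) b m

theorem inv_mul_inv_mul_mul_eq_commutatorElement (hK : commutator K ≤ Subgroup.center K)
    (a b : K) : a⁻¹ * b⁻¹ * a * b = ⁅a, b⁆ := by
  have h₀ : a⁻¹ * b⁻¹ * a * b = ⁅a⁻¹, b⁻¹⁆ := by rw [commutatorElement_def, inv_inv, inv_inv]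
  have h₁ : ⁅a⁻¹, b⁻¹⁆ = ⁅a, b⁻¹⁆⁻¹ := map_inv (commutatorLeftHom hK b⁻¹) a
  have h₂ : ⁅a, b⁻¹⁆ = ⁅a, b⁆⁻¹ := map_inv (commutatorRightHom hK a) b
  rw [h₀, h₁, h₂, inv_inv]

theorem commutatorElement_eq_one_of_mem_left (hK : commutator K ≤ Subgroup.center K) {z : K}
    (hz : z ∈ commutator K) (g : K) : ⁅z, g⁆ = 1 :=
  commutatorElement_eq_one_iff_commute.mpr (commute_of_mem_commutator hK hz g)

theorem commutatorElement_eq_one_of_mem_right (hK : commutator K ≤ Subgroup.center K) {z : K}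
    (hz : z ∈ commutator K) (g : K) : ⁅g, z⁆ = 1 :=
  commutatorElement_eq_one_iff_commute.mpr (commute_of_mem_commutator hK hz g).symm

theorem commutatorElement_congr_left (hK : commutator K ≤ Subgroup.center K) {u v : K}
    (huv : u * v⁻¹ ∈ commutator K) (w : K) : ⁅u, w⁆ = ⁅v, w⁆ := by
  calc ⁅u, w⁆ = ⁅u * v⁻¹ * v, w⁆ := by rw [inv_mul_cancel_right]
    _ = ⁅v, w⁆ := by
      rw [commutatorElement_mul_left hK, commutatorElement_eq_one_of_mem_left hK huv, one_mul]

theorem commutatorElement_pow_mul_left (hK : commutator K ≤ Subgroup.center K) {z : K}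
    (hz : z ∈ commutator K) (a b : K) (n : ℕ) : ⁅a ^ n * z, b⁆ = ⁅a, b⁆ ^ n := by
  rw [commutatorElement_mul_left hK, commutatorElement_eq_one_of_mem_left hK hz, mul_one,
    commutatorElement_pow_left hK]

theorem commutatorElement_pow_mul_right (hK : commutator K ≤ Subgroup.center K) {z : K}
    (hz : z ∈ commutator K) (g a : K) (n : ℕ) : ⁅g, a ^ n * z⁆ = ⁅g ^ n, a⁆ := by
  rw [commutatorElement_mul_right hK, commutatorElement_eq_one_of_mem_right hK hz, mul_one,
    commutatorElement_pow_right hK, commutatorElement_pow_left hK]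

theorem commutatorElement_of_pow_mul_inv_mem (hK : commutator K ≤ Subgroup.center K)
    {n : ℕ} {r s r' s' g : K} (hr' : r' ∈ commutator K) (hs' : s' ∈ commutator K) {a b : ℤ}
    (hg : g ^ n * ((r ^ n * r') ^ a * (s ^ n * s') ^ b)⁻¹ ∈ commutator K) :
    ⁅g, r ^ n * r'⁆ = ⁅r, s⁆ ^ (-(n * b)) ∧ ⁅g, s ^ n * s'⁆ = ⁅r, s⁆ ^ (n * a) := by
  have hrr : ⁅r ^ n * r', r⁆ = 1 := by
    rw [commutatorElement_pow_mul_left hK hr', commutatorElement_self, one_pow]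
  have hss : ⁅s ^ n * s', s⁆ = 1 := by
    rw [commutatorElement_pow_mul_left hK hs', commutatorElement_self, one_pow]
  have hsr : ⁅s ^ n * s', r⁆ = ⁅r, s⁆⁻¹ ^ n := by
    rw [commutatorElement_pow_mul_left hK hs', commutatorElement_inv]
  rw [commutatorElement_pow_mul_right hK hr', commutatorElement_pow_mul_right hK hs',
    commutatorElement_congr_left hK hg, commutatorElement_congr_left hK hg,
    commutatorElement_mul_left hK, commutatorElement_mul_left hK]
  simp only [commutatorElement_zpow_left hK]
  rw [hrr, hss, hsr, commutatorElement_pow_mul_left hK hr']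
  generalize ⁅r, s⁆ = w
  constructor <;> group

end CentralCommutator

open CentralCommutator in
theorem stmt_7_general {K : Type*} [Group K] (hK : commutator K ≤ Subgroup.center K)
    (G : Subgroup K) (n : ℕ)
    (x y r s r' s' : K) (hx : x ∈ G) (hy : y ∈ G)
    (hr' : r' ∈ commutator K) (hs' : s' ∈ commutator K)
    (hxr : x = r ^ n * r') (hys : y = s ^ n * s')
    (a b c j : ℤ) (g₁ g₂ : K) (hg₁ : g₁ ∈ G) (hg₂ : g₂ ∈ G)
    (h1 : g₁ ^ n * (x ^ a * y ^ b)⁻¹ ∈ commutator K)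
    (h2 : g₂ ^ n * (x ^ (b + j) * y ^ c)⁻¹ ∈ commutator K) :
    (r⁻¹ * s⁻¹ * r * s) ^ (j * (n : ℤ)) =
      (g₁⁻¹ * x⁻¹ * g₁ * x) * (g₂⁻¹ * y⁻¹ * g₂ * y) ∧
    (r⁻¹ * s⁻¹ * r * s) ^ (j * (n : ℤ)) ∈ G := by
  have hg₁x : ⁅g₁, x⁆ = ⁅r, s⁆ ^ (-(n * b)) := by
    subst hxr hys; exact (commutatorElement_of_pow_mul_inv_mem hK hr' hs' h1).1
  have hg₂y : ⁅g₂, y⁆ = ⁅r, s⁆ ^ (n * (b + j)) := by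
    subst hxr hys; exact (commutatorElement_of_pow_mul_inv_mem hK hr' hs' h2).2
  have key : (r⁻¹ * s⁻¹ * r * s) ^ (j * (n : ℤ)) =
      (g₁⁻¹ * x⁻¹ * g₁ * x) * (g₂⁻¹ * y⁻¹ * g₂ * y) := by
    rw [inv_mul_inv_mul_mul_eq_commutatorElement hK, inv_mul_inv_mul_mul_eq_commutatorElement hK,
      inv_mul_inv_mul_mul_eq_commutatorElement hK, hg₁x, hg₂y, ← zpow_add]
    congr 1
    ring
  have inv_mul_inv_mul_mul_mem : ∀ u ∈ G, ∀ v ∈ G, u⁻¹ * v⁻¹ * u * v ∈ G := fun u hu v hv ↦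
    mul_mem (mul_mem (mul_mem (inv_mem hu) (inv_mem hv)) hu) hv
  exact ⟨key, key ▸ mul_mem (inv_mul_inv_mul_mul_mem _ hg₁ _ hx)
    (inv_mul_inv_mul_mul_mem _ hg₂ _ hy)⟩

/-- Key lemma: if `x = rⁿ r'` and `y = sⁿ s'` in a nil-2 overgroup `K` of `G`, and the
congruences `g₁ⁿ ≡ xᵃyᵇ`, `g₂ⁿ ≡ x^(b+j)y^c (mod [K,K])` hold with `g₁,g₂ ∈ G`, then
`[r,s]^(jn) = [g₁,x][g₂,y]`; in particular `[r,s]^(jn) ∈ G`. -/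
theorem stmt_7 {K : Type*} [Group K] (hK : commutator K ≤ Subgroup.center K)
    (G : Subgroup K) (n : ℕ) (hn : 0 < n)
    (x y r s r' s' : K) (hx : x ∈ G) (hy : y ∈ G)
    (hr' : r' ∈ commutator K) (hs' : s' ∈ commutator K)
    (hxr : x = r ^ n * r') (hys : y = s ^ n * s')
    (a b c j : ℤ) (g₁ g₂ : K) (hg₁ : g₁ ∈ G) (hg₂ : g₂ ∈ G)
    (h1 : g₁ ^ n * (x ^ a * y ^ b)⁻¹ ∈ commutator K)
    (h2 : g₂ ^ n * (x ^ (b + j) * y ^ c)⁻¹ ∈ commutator K) :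
    (r⁻¹ * s⁻¹ * r * s) ^ (j * (n : ℤ)) =
      (g₁⁻¹ * x⁻¹ * g₁ * x) * (g₂⁻¹ * y⁻¹ * g₂ * y) ∧
    (r⁻¹ * s⁻¹ * r * s) ^ (j * (n : ℤ)) ∈ G :=
  stmt_7_general hK G n x y r s r' s' hx hy hr' hs' hxr hys a b c j g₁ g₂ hg₁ hg₂ h1 h2
end

section
/- Let G be a nilpotent group of class at most two and g₁, …, g_r central elements of G. For any positive integers n₁, …, n_r there exists a nilpotent group K of class at most two containing G as a subgroup and elements h₁, …, h_r ∈ Z(K) with h_i^(n_i) = g_i for each i. -/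
/-!
Adjoin free roots and divide out the relations: in `G × ℤʳ`, the elements
`(g₁^{-v₁} ⋯ g_r^{-v_r}, (n₁v₁, …, n_rv_r))` form a central subgroup `N`, and `K = (G × ℤʳ) ⧸ N`
is the pushout of `G ← ℤʳ → ℤʳ` along `v ↦ ∏ gᵢ^{vᵢ}` and `v ↦ (nᵢvᵢ)ᵢ`. As a quotient of a
product of class-two groups, `K` has class at most two; `G` embeds because `v ↦ (nᵢvᵢ)ᵢ` is
injective; and the image of the `i`-th basis vector of the second factor is a central
`nᵢ`-th root of `gᵢ`.
-/

universe u v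

open Subgroup

section

variable {G H : Type*} [Group G] [Group H]

theorem Subgroup.normal_of_le_center {N : Subgroup G} (hN : N ≤ center G) : N.Normal where
  conj_mem n hn g := by rw [mem_center_iff.mp (hN hn) g, mul_inv_cancel_right]; exact hn

theorem Subgroup.map_mem_center_of_surjective {f : G →* H} (hf : Function.Surjective f) {z : G}
    (hz : z ∈ center G) : f z ∈ center H := by
  rw [mem_center_iff]
  intro y
  obtain ⟨x, rfl⟩ := hf y
  rw [← map_mul, ← map_mul, mem_center_iff.mp hz x]

theorem commutator_le_center_of_surjective {f : G →* H} (hf : Function.Surjective f)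
    (hG : commutator G ≤ center G) : commutator H ≤ center H := by
  rw [commutator_def, ← map_top_of_surjective f hf, ← map_commutator, ← commutator_def]
  rintro _ ⟨x, hx, rfl⟩
  exact map_mem_center_of_surjective hf (hG hx)

theorem commutator_prod_le_center (hG : commutator G ≤ center G)
    (hH : commutator H ≤ center H) : commutator (G × H) ≤ center (G × H) := by
  rw [Subgroup.center_prod, commutator_def, ← top_prod_top, commutator_prod_prod]
  exact prod_mono hG hH

theorem exists_zpowers_prod_hom {ι : Type*} [Fintype ι] [DecidableEq ι] (g : ι → G)
    (hg : ∀ i, g i ∈ center G) :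
    ∃ ψ : (ι → Multiplicative ℤ) →* G,
      ψ.range ≤ center G ∧ ∀ i, ψ (Pi.mulSingle i (.ofAdd 1)) = g i := by
  refine ⟨MonoidHom.noncommPiCoprod (fun i ↦ zpowersHom G (g i)) fun i j _ _ _ ↦
    Commute.zpow_zpow (mem_center_iff.mp (hg j) (g i) : Commute (g i) (g j)) _ _, ?_, fun i ↦ ?_⟩
  · refine (MonoidHom.noncommPiCoprod_range _).le.trans (iSup_le fun i ↦ ?_)
    rintro _ ⟨k, rfl⟩
    exact zpow_mem (hg i) _
  · exact (MonoidHom.noncommPiCoprod_mulSingle _ i _).trans (by simp)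

end

namespace CentralPushout

variable {G A B : Type*} [Group G] [CommGroup A] [CommGroup B] (ψ : A →* G) (ι : A →* B)

/-- Dividing `G × B` by the range identifies `(1, ι a)` with `(ψ a, 1)`. -/
def rel : A →* G × B := (ψ.comp invMonoidHom).prod ι

variable {ψ} in
theorem rel_range_le_center (hψ : ψ.range ≤ center G) : (rel ψ ι).range ≤ center (G × B) := by
  rintro _ ⟨a, rfl⟩
  rw [Subgroup.center_prod, center_eq_top (G := B)]
  exact ⟨hψ ⟨a⁻¹, rfl⟩, mem_top _⟩

theorem mk_inr_eq_mk_inl (a : A) :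
    (QuotientGroup.mk ((1 : G), ι a) : (G × B) ⧸ (rel ψ ι).range) =
      QuotientGroup.mk (ψ a, (1 : B)) := by
  rw [QuotientGroup.eq]
  exact ⟨a⁻¹, by simp [rel]⟩

variable {ψ ι} in
theorem mk_inl_injective (hι : Function.Injective ι) :
    Function.Injective fun x : G ↦ (QuotientGroup.mk (x, (1 : B)) : (G × B) ⧸ (rel ψ ι).range) := by
  intro x y hxy
  obtain ⟨a, ha⟩ := QuotientGroup.eq.mp hxy
  have ha1 : a = 1 := hι (by simpa [rel] using congrArg Prod.snd ha)
  simpa [rel, ha1, eq_comm, inv_mul_eq_one] using congrArg Prod.fst ha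

end CentralPushout

open CentralPushout in
theorem exists_central_pushout {G : Type u} {A : Type*} {B : Type v} [Group G] [CommGroup A]
    [CommGroup B] (hG : commutator G ≤ center G) {ψ : A →* G} (hψ : ψ.range ≤ center G)
    {ι : A →* B} (hι : Function.Injective ι) :
    ∃ (K : Type (max u v)) (_ : Group K), commutator K ≤ center K ∧
      ∃ (φ : G →* K) (χ : B →* K), Function.Injective φ ∧ χ.range ≤ center K ∧
        χ.comp ι = φ.comp ψ := by
  have := normal_of_le_center (rel_range_le_center ι hψ)
  have hmk := QuotientGroup.mk'_surjective (rel ψ ι).range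
  refine ⟨_ ⧸ (rel ψ ι).range, inferInstance,
    commutator_le_center_of_surjective hmk (commutator_prod_le_center hG (by simp [center_eq_top])),
    (QuotientGroup.mk' _).comp (.inl G B), (QuotientGroup.mk' _).comp (.inr G B),
    mk_inl_injective hι, ?_, MonoidHom.ext (mk_inr_eq_mk_inl ψ ι)⟩
  rintro _ ⟨b, rfl⟩
  refine map_mem_center_of_surjective hmk ?_
  rw [Subgroup.center_prod, center_eq_top (G := B)]
  exact ⟨one_mem _, mem_top b⟩

/-- Central elements of a nil-2 group admit central `n_i`-th roots in some nil-2
extension. -/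
theorem stmt_8 {G : Type u} [Group G] (hG : commutator G ≤ Subgroup.center G)
    (r : ℕ) (g : Fin r → G) (hg : ∀ i, g i ∈ Subgroup.center G)
    (m : Fin r → ℕ) (hm : ∀ i, 0 < m i) :
    ∃ (K : Type u) (_ : Group K), commutator K ≤ Subgroup.center K ∧
      ∃ φ : G →* K, Function.Injective φ ∧
        ∃ h : Fin r → K, ∀ i, h i ∈ Subgroup.center K ∧ (h i) ^ (m i) = φ (g i) := by
  obtain ⟨ψ, hψ, hψg⟩ := exists_zpowers_prod_hom g hg
  let ι : (Fin r → Multiplicative ℤ) →* (Fin r → Multiplicative ℤ) :=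
    MonoidHom.piMap fun i ↦ powMonoidHom (m i)
  have hι : Function.Injective ι :=
    Function.Injective.piMap fun i ↦ pow_left_injective (hm i).ne'
  obtain ⟨K, _, hK, φ, χ, hφ, hχ, hcomm⟩ := exists_central_pushout hG hψ hι
  refine ⟨K, inferInstance, hK, φ, hφ, fun i ↦ χ (Pi.mulSingle i (.ofAdd 1)),
    fun i ↦ ⟨hχ ⟨_, rfl⟩, ?_⟩⟩
  have hι_single : ι (Pi.mulSingle i (.ofAdd 1)) = Pi.mulSingle i (.ofAdd 1) ^ m i := by
    ext j
    by_cases hj : j = i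
    · subst hj; simp [ι]
    · simp [ι, hj]
  rw [← map_pow, ← hι_single, ← MonoidHom.comp_apply, hcomm, MonoidHom.comp_apply, hψg]
end

section
/- Let G be a nilpotent group of class at most two of even exponent 2n, and let g ∈ Z(G) with gⁿ = e. Then there exists a nilpotent group K of class at most two, of exponent 2n, containing G as a subgroup, with g ∈ [K,K]. -/
universe u

/-! On `G × R × R` put the Heisenberg-type product
`(a, x, y) * (b, x', y') = (a * b * χ (y * x'), x + x', y + y')`, where `χ : R → Z(G)` is additive.
Then `⁅(1, 0, y), (1, x, 0)⁆ = (χ (y * x), 0, 0)`, so every value of `χ` becomes a commutator; the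
extension maps onto the abelian group `G ⧸ Z(G) × R × R` with central kernel, so it has class two;
and `(a, x, y) ^ j = (a ^ j * χ (C(j, 2) * y * x), j * x, j * y)`. Taking `R = ZMod (2n)` and
`χ r = g ^ r`, the identity `C(2n, 2) = n (2n - 1)` and `gⁿ = 1` keep the exponent at `2n`. -/

section

open Multiplicative Subgroup
open scoped commutatorElement

theorem Subgroup.coe_center_mul_comm {G : Type*} [Group G] (z : center G) (a : G) :
    (z : G) * a = a * z :=
  (mem_center_iff.mp z.2 a).symm

namespace ZMod

variable {H : Type*} [Group H] {m : ℕ}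

def zpowersHom (h : H) (hh : h ^ m = 1) : Multiplicative (ZMod m) →* H :=
  AddMonoidHom.toMultiplicativeLeft <| ZMod.lift m
    ⟨zmultiplesHom (Additive H) (Additive.ofMul h), by
      rw [zmultiplesHom_apply, natCast_zsmul, ← ofMul_pow, hh, ofMul_one]⟩

theorem zpowersHom_ofAdd_intCast (h : H) (hh : h ^ m = 1) (k : ℤ) :
    zpowersHom h hh (ofAdd (k : ZMod m)) = h ^ k := by
  simp [zpowersHom]

theorem zpowersHom_pow_eq_one {h : H} (hh : h ^ m = 1) {n : ℕ} (hn : h ^ n = 1)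
    (r : Multiplicative (ZMod m)) : zpowersHom h hh r ^ n = 1 := by
  obtain ⟨k, hk⟩ := ZMod.intCast_surjective (toAdd r)
  rw [← ofAdd_toAdd r, ← hk, zpowersHom_ofAdd_intCast, ← zpow_natCast, ← zpow_mul, mul_comm,
    zpow_mul, zpow_natCast, hn, one_zpow]

end ZMod

@[ext]
structure HeisenbergExt {G : Type*} [Group G] {R : Type*} [Ring R]
    (χ : Multiplicative R →* center G) where
  base : G
  x : R
  y : R

namespace HeisenbergExt

variable {G : Type*} [Group G] {R : Type*} [Ring R] {χ : Multiplicative R →* center G}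

instance : Group (HeisenbergExt χ) where
  mul p q := ⟨p.base * q.base * χ (ofAdd (p.y * q.x)), p.x + q.x, p.y + q.y⟩
  one := ⟨1, 0, 0⟩
  inv p := ⟨p.base⁻¹ * χ (ofAdd (p.y * p.x)), -p.x, -p.y⟩
  mul_assoc p q r := by
    refine HeisenbergExt.ext ?_ (add_assoc ..) (add_assoc ..)
    show p.base * q.base * χ (ofAdd (p.y * q.x)) * r.base * χ (ofAdd ((p.y + q.y) * r.x)) =
      p.base * (q.base * r.base * χ (ofAdd (q.y * r.x))) * χ (ofAdd (p.y * (q.x + r.x)))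
    -- move the central twists to the right; they merge since
    -- `y x' + (y + y') x'' = y' x'' + y (x' + x'')`
    simp only [mul_assoc, coe_center_mul_comm _ r.base]
    simp only [← mul_assoc, ← coe_mul, ← map_mul, ← ofAdd_add]
    congr 4
    noncomm_ring
  one_mul p := by
    refine HeisenbergExt.ext ?_ (zero_add _) (zero_add _)
    show 1 * p.base * χ (ofAdd (0 * p.x)) = p.base
    simp
  mul_one p := by
    refine HeisenbergExt.ext ?_ (add_zero _) (add_zero _)
    show p.base * 1 * χ (ofAdd (p.y * 0)) = p.base
    simp
  inv_mul_cancel p := by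
    refine HeisenbergExt.ext ?_ (neg_add_cancel _) (neg_add_cancel _)
    show p.base⁻¹ * χ (ofAdd (p.y * p.x)) * p.base * χ (ofAdd (-p.y * p.x)) = 1
    rw [mul_assoc _ _ p.base, coe_center_mul_comm, ← mul_assoc, inv_mul_cancel, one_mul, ← coe_mul,
      ← map_mul, ← ofAdd_add, neg_mul, add_neg_cancel, ofAdd_zero, map_one, coe_one]

@[simp] theorem mul_base (p q : HeisenbergExt χ) :
    (p * q).base = p.base * q.base * χ (ofAdd (p.y * q.x)) := rfl
@[simp] theorem mul_x (p q : HeisenbergExt χ) : (p * q).x = p.x + q.x := rfl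
@[simp] theorem mul_y (p q : HeisenbergExt χ) : (p * q).y = p.y + q.y := rfl
@[simp] theorem one_base : (1 : HeisenbergExt χ).base = 1 := rfl
@[simp] theorem one_x : (1 : HeisenbergExt χ).x = 0 := rfl
@[simp] theorem one_y : (1 : HeisenbergExt χ).y = 0 := rfl
@[simp] theorem inv_base (p : HeisenbergExt χ) :
    p⁻¹.base = p.base⁻¹ * χ (ofAdd (p.y * p.x)) := rfl
@[simp] theorem inv_x (p : HeisenbergExt χ) : p⁻¹.x = -p.x := rfl
@[simp] theorem inv_y (p : HeisenbergExt χ) : p⁻¹.y = -p.y := rfl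

variable (χ) in
def inl : G →* HeisenbergExt χ where
  toFun a := ⟨a, 0, 0⟩
  map_one' := rfl
  map_mul' a b := by ext <;> simp

theorem inl_injective : Function.Injective (inl χ) :=
  fun _ _ h => congrArg base h

theorem inl_coe_mem_commutator (r : Multiplicative R) :
    inl χ (χ r) ∈ commutator (HeisenbergExt χ) := by
  have h : ⁅(⟨1, 0, toAdd r⟩ : HeisenbergExt χ), ⟨1, 1, 0⟩⁆ = inl χ (χ r) := by
    ext <;> simp [commutatorElement_def, inl]
  exact h ▸ commutator_mem_commutator (mem_top _) (mem_top _)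

theorem pow_def (p : HeisenbergExt χ) (j : ℕ) :
    p ^ j = ⟨p.base ^ j * χ (ofAdd ((j.choose 2 : R) * (p.y * p.x))), j * p.x, j * p.y⟩ := by
  induction j with
  | zero => ext <;> simp
  | succ j ih =>
    rw [pow_succ, ih]
    ext
    · simp only [mul_base]
      rw [mul_assoc _ _ p.base, coe_center_mul_comm, ← mul_assoc, ← pow_succ, mul_assoc, ← coe_mul,
        ← map_mul, ← ofAdd_add, Nat.choose_succ_succ', Nat.choose_one_right]
      congr 4
      push_cast
      noncomm_ring
    · simp [add_one_mul]
    · simp [add_one_mul]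

theorem pow_two_mul_eq_one {n : ℕ} (hG : ∀ a : G, a ^ (2 * n) = 1)
    (hR : ((2 * n : ℕ) : R) = 0) (hχ : ∀ r, χ r ^ n = 1) (p : HeisenbergExt χ) :
    p ^ (2 * n) = 1 := by
  have hchoose : (2 * n).choose 2 = n * (2 * n - 1) := by
    rw [Nat.choose_two_right, mul_assoc, Nat.mul_div_cancel_left _ two_pos]
  ext
  · rw [pow_def, hG, hchoose, Nat.cast_mul, mul_assoc, ← nsmul_eq_mul, ofAdd_nsmul, map_pow, hχ]
    simp
  · simp [pow_def, hR]
  · simp [pow_def, hR]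

variable (χ) in
def projCenter : HeisenbergExt χ →* (G ⧸ center G) × Multiplicative R × Multiplicative R where
  toFun p := (p.base, ofAdd p.x, ofAdd p.y)
  map_one' := rfl
  map_mul' p q := by simp

theorem ker_projCenter_le_center : (projCenter χ).ker ≤ center (HeisenbergExt χ) := by
  intro p hp
  simp only [projCenter, MonoidHom.mem_ker, MonoidHom.coe_mk, OneHom.coe_mk, Prod.mk_eq_one,
    QuotientGroup.eq_one_iff, ofAdd_eq_one] at hp
  obtain ⟨hbase, hx, hy⟩ := hp
  refine mem_center_iff.mpr fun q => ?_
  ext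
  · simp [hx, hy, mem_center_iff.mp hbase]
  · simp [add_comm]
  · simp [add_comm]

open scoped IsMulCommutative in
theorem commutator_le_center (hG : commutator G ≤ center G) :
    commutator (HeisenbergExt χ) ≤ center (HeisenbergExt χ) := by
  have : IsMulCommutative (G ⧸ center G) := Normal.quotient_commutative_iff_commutator_le.mpr hG
  exact (Abelianization.commutator_subset_ker (projCenter χ)).trans ker_projCenter_le_center

end HeisenbergExt

end

theorem stmt_10_general {G : Type u} [Group G] (hG : commutator G ≤ Subgroup.center G)
    (n : ℕ) (hexp : ∀ x : G, x ^ (2 * n) = 1)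
    (g : G) (hg : g ∈ Subgroup.center G) (hgn : g ^ n = 1) :
    ∃ (K : Type u) (_ : Group K), commutator K ≤ Subgroup.center K ∧
      (∀ k : K, k ^ (2 * n) = 1) ∧
      ∃ φ : G →* K, Function.Injective φ ∧ φ g ∈ commutator K := by
  have hzn : (⟨g, hg⟩ : Subgroup.center G) ^ n = 1 := Subtype.ext hgn
  have hz2n : (⟨g, hg⟩ : Subgroup.center G) ^ (2 * n) = 1 := by rw [pow_mul', hzn, one_pow]
  have hχ : (ZMod.zpowersHom _ hz2n (Multiplicative.ofAdd 1) : G) = g := by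
    simpa using congrArg Subtype.val (ZMod.zpowersHom_ofAdd_intCast _ hz2n 1)
  refine ⟨HeisenbergExt _, inferInstance, HeisenbergExt.commutator_le_center hG,
    HeisenbergExt.pow_two_mul_eq_one hexp (ZMod.natCast_self _)
      (ZMod.zpowersHom_pow_eq_one hz2n hzn), HeisenbergExt.inl _,
    HeisenbergExt.inl_injective, ?_⟩
  simpa only [hχ] using
    HeisenbergExt.inl_coe_mem_commutator (χ := ZMod.zpowersHom _ hz2n) (Multiplicative.ofAdd 1)

/-- If `G` is a nil-2 group of exponent dividing `2n` and `g` is central with `gⁿ = e`,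
then there is a nil-2 extension of exponent dividing `2n` in which `g` is a commutator. -/
theorem stmt_10 {G : Type u} [Group G] (hG : commutator G ≤ Subgroup.center G)
    (n : ℕ) (hn : 0 < n) (hexp : ∀ x : G, x ^ (2 * n) = 1)
    (g : G) (hg : g ∈ Subgroup.center G) (hgn : g ^ n = 1) :
    ∃ (K : Type u) (_ : Group K), commutator K ≤ Subgroup.center K ∧
      (∀ k : K, k ^ (2 * n) = 1) ∧
      ∃ φ : G →* K, Function.Injective φ ∧ φ g ∈ commutator K :=
  stmt_10_general hG n hexp g hg hgn
end

section
/- (Perturbation argument) Let G be a nilpotent group of class at most two, H a subgroup of G, q a positive integer, and x, y ∈ G with x^q, y^q ∈ H[G,G]. Then for any h₁, h₂ ∈ H: [x,y]^q ∈ H if and only if [xh₁, yh₂]^q ∈ H. -/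
/-!
When `[G, G]` is central the commutator map `(a, b) ↦ ⁅a, b⁆` is bimultiplicative, so
`⁅a, b⁆ ^ q = ⁅a ^ q, b⁆ = ⁅a, b ^ q⁆` and commutators with central elements vanish. Expanding,
`⁅x h₁, y h₂⁆ ^ q = ⁅x, y⁆ ^ q ⁅x, h₂⁆ ^ q ⁅h₁, y⁆ ^ q ⁅h₁, h₂⁆ ^ q`, and writing `x ^ q = h c` with
`h ∈ H`, `c ∈ [G, G]` gives `⁅x, h₂⁆ ^ q = ⁅h c, h₂⁆ = ⁅h, h₂⁆ ∈ H`; likewise for `⁅h₁, y⁆ ^ q`.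
So the two `q`-th powers differ by a factor in `H`.
-/

open scoped commutatorElement

section CentralCommutators

variable {G : Type*} [Group G]

theorem commute_commutatorElement_of_commutator_le_center
    (hG : commutator G ≤ Subgroup.center G) (a b g : G) : Commute ⁅a, b⁆ g :=
  (Subgroup.mem_center_iff.mp
    (hG (Subgroup.commutator_mem_commutator (Subgroup.mem_top a) (Subgroup.mem_top b))) g).symm

theorem commutatorElement_mul_left_of_commutator_le_center_s11
    (hG : commutator G ≤ Subgroup.center G) (a b c : G) : ⁅a * b, c⁆ = ⁅a, c⁆ * ⁅b, c⁆ := by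
  rw [commutatorElement_mul_left_eq_conj_mul,
    ← (commute_commutatorElement_of_commutator_le_center hG b c a).eq, mul_inv_cancel_right]
  exact (commute_commutatorElement_of_commutator_le_center hG b c _).eq

theorem commutatorElement_mul_right_of_commutator_le_center
    (hG : commutator G ≤ Subgroup.center G) (a b c : G) : ⁅a, b * c⁆ = ⁅a, b⁆ * ⁅a, c⁆ := by
  rw [← commutatorElement_inv, commutatorElement_mul_left_of_commutator_le_center_s11 hG, mul_inv_rev,
    commutatorElement_inv, commutatorElement_inv]
  exact (commute_commutatorElement_of_commutator_le_center hG a c _).eq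

def commutatorElementLeftHom (hG : commutator G ≤ Subgroup.center G) (b : G) : G →* G :=
  MonoidHom.mk' (fun a ↦ ⁅a, b⁆) fun a c ↦
    commutatorElement_mul_left_of_commutator_le_center_s11 hG a c b

theorem commutatorElement_pow_left_of_commutator_le_center_s11
    (hG : commutator G ≤ Subgroup.center G) (a b : G) (n : ℕ) : ⁅a ^ n, b⁆ = ⁅a, b⁆ ^ n :=
  map_pow (commutatorElementLeftHom hG b) a n

theorem commutatorElement_inv_left_of_commutator_le_center
    (hG : commutator G ≤ Subgroup.center G) (a b : G) : ⁅a⁻¹, b⁆ = ⁅a, b⁆⁻¹ :=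
  map_inv (commutatorElementLeftHom hG b) a

theorem commutatorElement_inv_right_of_commutator_le_center
    (hG : commutator G ≤ Subgroup.center G) (a b : G) : ⁅a, b⁻¹⁆ = ⁅a, b⁆⁻¹ := by
  rw [← commutatorElement_inv, commutatorElement_inv_left_of_commutator_le_center hG,
    commutatorElement_inv]

theorem commutatorElement_eq_one_of_mem_center {a c : G} (hc : c ∈ Subgroup.center G) :
    ⁅c, a⁆ = 1 :=
  commutatorElement_eq_one_iff_mul_comm.mpr (Subgroup.mem_center_iff.mp hc a).symm

theorem Subgroup.commutatorElement_mem {H : Subgroup G} {a b : G} (ha : a ∈ H) (hb : b ∈ H) :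
    ⁅a, b⁆ ∈ H :=
  H.commutator_le_self (Subgroup.commutator_mem_commutator ha hb)

theorem commutatorElement_pow_mem_of_pow_mem_mul_commutator
    (hG : commutator G ≤ Subgroup.center G) {H : Subgroup G} {q : ℕ} {x k : G}
    (hx : ∃ h ∈ H, ∃ c ∈ commutator G, x ^ q = h * c) (hk : k ∈ H) : ⁅x, k⁆ ^ q ∈ H := by
  obtain ⟨h, hh, c, hc, hxq⟩ := hx
  rw [← commutatorElement_pow_left_of_commutator_le_center_s11 hG, hxq,
    commutatorElement_mul_left_of_commutator_le_center_s11 hG,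
    commutatorElement_eq_one_of_mem_center (hG hc), mul_one]
  exact H.commutatorElement_mem hh hk

end CentralCommutators

theorem stmt_11_general {G : Type*} [Group G] (hG : commutator G ≤ Subgroup.center G)
    (H : Subgroup G) (q : ℕ) (x y : G)
    (hx : ∃ h ∈ H, ∃ c ∈ commutator G, x ^ q = h * c)
    (hy : ∃ h ∈ H, ∃ c ∈ commutator G, y ^ q = h * c)
    (h₁ h₂ : G) (hh₁ : h₁ ∈ H) (hh₂ : h₂ ∈ H) :
    (x⁻¹ * y⁻¹ * x * y) ^ q ∈ H ↔
      ((x * h₁)⁻¹ * (y * h₂)⁻¹ * (x * h₁) * (y * h₂)) ^ q ∈ H := by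
  have hcomm (a b : G) : a⁻¹ * b⁻¹ * a * b = ⁅a, b⁆ :=
    calc a⁻¹ * b⁻¹ * a * b = ⁅a⁻¹, b⁻¹⁆ := by rw [commutatorElement_def, inv_inv, inv_inv]
      _ = ⁅a, b⁆ := by
        rw [commutatorElement_inv_left_of_commutator_le_center hG,
          commutatorElement_inv_right_of_commutator_le_center hG, inv_inv]
  have hcomm_mul_pow (a b c : G) : (⁅a, b⁆ * c) ^ q = ⁅a, b⁆ ^ q * c ^ q :=
    (commute_commutatorElement_of_commutator_le_center hG a b c).mul_pow q
  have hxh₂ : ⁅x, h₂⁆ ^ q ∈ H := commutatorElement_pow_mem_of_pow_mem_mul_commutator hG hx hh₂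
  have hh₁y : ⁅h₁, y⁆ ^ q ∈ H := by
    rw [← commutatorElement_inv, inv_pow]
    exact H.inv_mem (commutatorElement_pow_mem_of_pow_mem_mul_commutator hG hy hh₁)
  have hh₁h₂ : ⁅h₁, h₂⁆ ^ q ∈ H := H.pow_mem (H.commutatorElement_mem hh₁ hh₂) q
  rw [hcomm, hcomm, commutatorElement_mul_left_of_commutator_le_center_s11 hG,
    commutatorElement_mul_right_of_commutator_le_center hG,
    commutatorElement_mul_right_of_commutator_le_center hG, mul_assoc, hcomm_mul_pow,
    hcomm_mul_pow, hcomm_mul_pow]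
  exact (H.mul_mem_cancel_right (H.mul_mem hxh₂ (H.mul_mem hh₁y hh₁h₂))).symm

/-- Perturbation argument: if `x^q, y^q ∈ H[G,G]` and `h₁, h₂ ∈ H`, then
`[x,y]^q ∈ H ↔ [xh₁, yh₂]^q ∈ H`. -/
theorem stmt_11 {G : Type*} [Group G] (hG : commutator G ≤ Subgroup.center G)
    (H : Subgroup G) (q : ℕ) (hq : 0 < q) (x y : G)
    (hx : ∃ h ∈ H, ∃ c ∈ commutator G, x ^ q = h * c)
    (hy : ∃ h ∈ H, ∃ c ∈ commutator G, y ^ q = h * c)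
    (h₁ h₂ : G) (hh₁ : h₁ ∈ H) (hh₂ : h₂ ∈ H) :
    (x⁻¹ * y⁻¹ * x * y) ^ q ∈ H ↔
      ((x * h₁)⁻¹ * (y * h₂)⁻¹ * (x * h₁) * (y * h₂)) ^ q ∈ H :=
  stmt_11_general hG H q x y hx hy h₁ h₂ hh₁ hh₂
end

section
/- Let K be a nilpotent group of class at most two, G ≤ K, and suppose r, s ∈ K, q > 0 are such that r^q, s^q ∈ G[K,K], and suppose r^q is congruent modulo [K,K] to a q-th power of an element of G. Then [r,s]^q ∈ G. -/
/-!
With the convention `[x, y] = x⁻¹ y⁻¹ x y`, class two makes every commutator central, so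
`[x, y]` only depends on `x` modulo the centre and `[x, y]^n = [x^n, y]`. Writing
`r^q = c g^q` and `s^q = g' c'` with `c, c'` central and `g, g' ∈ G`, this gives
`[r, s]^q = [r^q, s] = [g^q, s] = [g, s]^q = ([s, g]^q)⁻¹ = [s^q, g]⁻¹ = [g', g]⁻¹ ∈ G`.
-/

open Subgroup

section ClassTwo

variable {K : Type*} [Group K]

theorem inv_mul_inv_mul_mul_of_mem_center {c : K} (hc : c ∈ center K) (w y : K) :
    (c * w)⁻¹ * y⁻¹ * (c * w) * y = w⁻¹ * y⁻¹ * w * y := by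
  have hcy : c⁻¹ * y⁻¹ * c = y⁻¹ := by
    rw [mul_assoc, mem_center_iff.mp hc, inv_mul_cancel_left]
  calc (c * w)⁻¹ * y⁻¹ * (c * w) * y = w⁻¹ * (c⁻¹ * y⁻¹ * c) * w * y := by group
    _ = w⁻¹ * y⁻¹ * w * y := by rw [hcy]

variable (hK : commutator K ≤ center K)
include hK

theorem inv_mul_inv_mul_mul_mem_center (x y : K) : x⁻¹ * y⁻¹ * x * y ∈ center K := by
  refine hK ?_
  rw [commutator_def]
  simpa only [commutatorElement_def, inv_inv] using
    Subgroup.commutator_mem_commutator (mem_top x⁻¹) (mem_top y⁻¹)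

theorem inv_mul_inv_mul_mul_pow (x y : K) (n : ℕ) :
    (x⁻¹ * y⁻¹ * x * y) ^ n = (x ^ n)⁻¹ * y⁻¹ * x ^ n * y := by
  set z := x⁻¹ * y⁻¹ * x * y
  have hxz : Commute x z := mem_center_iff.mp (inv_mul_inv_mul_mul_mem_center hK x y) x
  have hconj : y⁻¹ * x ^ n * y = x ^ n * z ^ n := by
    calc y⁻¹ * x ^ n * y = (y⁻¹ * x * y) ^ n := by simpa using (conj_pow (a := y⁻¹)).symm
      _ = (x * z) ^ n := by simp only [z]; group
      _ = x ^ n * z ^ n := hxz.mul_pow n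
  calc z ^ n = (x ^ n)⁻¹ * (x ^ n * z ^ n) := by group
    _ = (x ^ n)⁻¹ * y⁻¹ * x ^ n * y := by rw [← hconj]; group

end ClassTwo

theorem stmt_12_general {K : Type*} [Group K] (hK : commutator K ≤ Subgroup.center K)
    (G : Subgroup K) (q : ℕ) (r s : K)
    (hs : ∃ g ∈ G, ∃ c ∈ commutator K, s ^ q = g * c)
    (hroot : ∃ g ∈ G, r ^ q * (g ^ q)⁻¹ ∈ commutator K) :
    (r⁻¹ * s⁻¹ * r * s) ^ q ∈ G := by
  obtain ⟨g, hg, hc⟩ := hroot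
  obtain ⟨g', hg', c', hc', hs'⟩ := hs
  have hrq : r ^ q = r ^ q * (g ^ q)⁻¹ * g ^ q := by group
  have hsq : s ^ q = c' * g' := by rw [hs', mem_center_iff.mp (hK hc')]
  have key : (r⁻¹ * s⁻¹ * r * s) ^ q = (g'⁻¹ * g⁻¹ * g' * g)⁻¹ := by
    calc (r⁻¹ * s⁻¹ * r * s) ^ q = (r ^ q)⁻¹ * s⁻¹ * r ^ q * s := inv_mul_inv_mul_mul_pow hK r s q
      _ = (g ^ q)⁻¹ * s⁻¹ * g ^ q * s := by
        rw [hrq, inv_mul_inv_mul_mul_of_mem_center (hK hc)]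
      _ = (g⁻¹ * s⁻¹ * g * s) ^ q := (inv_mul_inv_mul_mul_pow hK g s q).symm
      _ = ((s⁻¹ * g⁻¹ * s * g) ^ q)⁻¹ := by rw [← inv_pow]; group
      _ = ((s ^ q)⁻¹ * g⁻¹ * s ^ q * g)⁻¹ := by rw [inv_mul_inv_mul_mul_pow hK s g q]
      _ = (g'⁻¹ * g⁻¹ * g' * g)⁻¹ := by
        rw [hsq, inv_mul_inv_mul_mul_of_mem_center (hK hc')]
  rw [key]
  exact G.inv_mem (G.mul_mem (G.mul_mem (G.mul_mem (G.inv_mem hg') (G.inv_mem hg)) hg') hg)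

/-- If `r^q, s^q ∈ G[K,K]` and `r^q` is congruent modulo `[K,K]` to a `q`-th power of an
element of `G`, then `[r,s]^q ∈ G`. -/
theorem stmt_12 {K : Type*} [Group K] (hK : commutator K ≤ Subgroup.center K)
    (G : Subgroup K) (q : ℕ) (hq : 0 < q) (r s : K)
    (hr : ∃ g ∈ G, ∃ c ∈ commutator K, r ^ q = g * c)
    (hs : ∃ g ∈ G, ∃ c ∈ commutator K, s ^ q = g * c)
    (hroot : ∃ g ∈ G, r ^ q * (g ^ q)⁻¹ ∈ commutator K) :
    (r⁻¹ * s⁻¹ * r * s) ^ q ∈ G :=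
  stmt_12_general hK G q r s hs hroot
end
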